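/- arXiv:1508.07789 — 2 statements merged into one kernel-verified Lean document; each statement's English description precedes it below -/
import Mathlib

section
/- Let (E, M) be an orthogonal factorisation system on a category C with terminal object 1, and suppose E satisfies the 2-out-of-3 property (if any two of f, g, g∘f lie in E, so does the third). Then a morphism f : a → b lies in E if and only if for every object x such that the unique map x → 1 lies in M, the precomposition map Hom(b, x) → Hom(a, x) is a bijection. -/
open CategoryTheory

universe v u

/-- `e` is left orthogonal to `m`: every commutative square from `e` to `m`
has a unique diagonal filler. -/
def Orthogonal {C : Type u} [Category.{v} C] {a b c d : C}
    (e : a ⟶ b) (m : c ⟶ d) : Prop :=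
  ∀ (f : a ⟶ c) (g : b ⟶ d), e ≫ g = f ≫ m →
    ∃! h : b ⟶ c, e ≫ h = f ∧ h ≫ m = g

/-- An orthogonal factorisation system on `C`. -/
structure OFS (C : Type u) [Category.{v} C] where
  E : MorphismProperty C
  M : MorphismProperty C
  factor : ∀ {a b : C} (f : a ⟶ b),
    ∃ (c : C) (e : a ⟶ c) (m : c ⟶ b), E e ∧ M m ∧ e ≫ m = f
  E_iff : ∀ {a b : C} (e : a ⟶ b),
    E e ↔ ∀ {c d : C} (m : c ⟶ d), M m → Orthogonal e m
  M_iff : ∀ {c d : C} (m : c ⟶ d),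
    M m ↔ ∀ {a b : C} (e : a ⟶ b), E e → Orthogonal e m


/-!
Call `x` local when `x ⟶ 1` lies in `M`, and call `f` a local bijection when precomposition
with `f` is bijective on maps into every local object. Maps in `E` are local bijections, by
orthogonality against `x ⟶ 1`. Conversely, factoring `a ⟶ 1` and `b ⟶ 1` gives `E`-maps
`ηa : a ⟶ ra` and `ηb : b ⟶ rb` into local objects. If `f` is a local bijection, then
`ηa = f ≫ s` and `s = ηb ≫ u` for some `s` and `u`. Local bijections satisfy left
cancellation, so `u` is a local bijection between local objects, hence an isomorphism
(Yoneda). Then `s ∈ E`, and 2-out-of-3 applied to `f ≫ s = ηa` gives `f ∈ E`.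
-/

open Limits

lemma Orthogonal.bijective_precomp {C : Type u} [Category.{v} C] {a b x t : C}
    {e : a ⟶ b} {m : x ⟶ t} (ht : IsTerminal t) (h : Orthogonal e m) :
    Function.Bijective (fun g : b ⟶ x => e ≫ g) := by
  constructor
  · intro g₁ g₂ hg
    obtain ⟨_, _, huniq⟩ := h (e ≫ g₁) (ht.from b) (ht.hom_ext _ _)
    exact (huniq g₁ ⟨rfl, ht.hom_ext _ _⟩).trans
      (huniq g₂ ⟨hg.symm, ht.hom_ext _ _⟩).symm
  · intro g
    obtain ⟨h, ⟨hh, _⟩, _⟩ := h g (ht.from b) (ht.hom_ext _ _)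
    exact ⟨h, hh⟩

namespace OFS

variable {C : Type u} [Category.{v} C] (S : OFS C)

lemma E_of_isIso {a b : C} (e : a ⟶ b) [IsIso e] : S.E e := by
  rw [S.E_iff]
  intro c d m _ f g hcomm
  refine ⟨inv e ≫ f, ⟨by simp, ?_⟩, ?_⟩
  · rw [Category.assoc, ← hcomm, IsIso.inv_hom_id_assoc]
  · rintro h ⟨rfl, _⟩
    rw [IsIso.inv_hom_id_assoc]

variable [HasTerminal C]

def IsLocal (x : C) : Prop :=
  S.M (terminal.from x)

def IsLocalBijection {a b : C} (f : a ⟶ b) : Prop :=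
  ∀ x : C, S.IsLocal x → Function.Bijective (fun g : b ⟶ x => f ≫ g)

lemma exists_E_to_isLocal (a : C) : ∃ (r : C) (η : a ⟶ r), S.E η ∧ S.IsLocal r := by
  obtain ⟨r, η, m, hη, hm, -⟩ := S.factor (terminal.from a)
  exact ⟨r, η, hη, by rwa [IsLocal, terminal.hom_ext (terminal.from r) m]⟩

lemma isLocalBijection_of_E {a b : C} {f : a ⟶ b} (hf : S.E f) : S.IsLocalBijection f :=
  fun _ hx => ((S.E_iff f).mp hf _ hx).bijective_precomp terminalIsTerminal

variable {S}

lemma IsLocalBijection.of_comp {a b c : C} {f : a ⟶ b} {g : b ⟶ c}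
    (hf : S.IsLocalBijection f) (hfg : S.IsLocalBijection (f ≫ g)) :
    S.IsLocalBijection g := by
  intro x hx
  have hcomp :
      (fun h : b ⟶ x => f ≫ h) ∘ (fun h : c ⟶ x => g ≫ h) = fun h => (f ≫ g) ≫ h := by
    funext h
    simp
  exact ((hf x hx).of_comp_iff' _).mp (hcomp ▸ hfg x hx)

lemma IsLocalBijection.isIso {r r' : C} {u : r ⟶ r'} (hu : S.IsLocalBijection u)
    (hr : S.IsLocal r) (hr' : S.IsLocal r') : IsIso u := by
  obtain ⟨v, huv⟩ := (hu r hr).2 (𝟙 r)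
  refine ⟨v, huv, (hu r' hr').1 ?_⟩
  simp only at huv ⊢
  rw [reassoc_of% huv, Category.comp_id]

end OFS

theorem stmt6 {C : Type u} [Category.{v} C] [Limits.HasTerminal C] (S : OFS C)
    (h23 : ∀ {a b c : C} (f : a ⟶ b) (g : b ⟶ c),
      (S.E f → S.E g → S.E (f ≫ g)) ∧
      (S.E f → S.E (f ≫ g) → S.E g) ∧
      (S.E g → S.E (f ≫ g) → S.E f))
    {a b : C} (f : a ⟶ b) :
    S.E f ↔ ∀ x : C, S.M (Limits.terminal.from x) →
      Function.Bijective (fun g : b ⟶ x => f ≫ g) := by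
  refine ⟨S.isLocalBijection_of_E, fun hf => ?_⟩
  obtain ⟨ra, ηa, hηa, hra⟩ := S.exists_E_to_isLocal a
  obtain ⟨rb, ηb, hηb, hrb⟩ := S.exists_E_to_isLocal b
  obtain ⟨s, hs⟩ := (hf ra hra).2 ηa
  obtain ⟨u, hu⟩ := (S.isLocalBijection_of_E hηb ra hra).2 s
  simp only at hs hu
  have hs_local : S.IsLocalBijection s :=
    OFS.IsLocalBijection.of_comp hf (hs ▸ S.isLocalBijection_of_E hηa)
  have hu_iso : IsIso u :=
    ((S.isLocalBijection_of_E hηb).of_comp (hu ▸ hs_local)).isIso hrb hra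
  have hEs : S.E s := hu ▸ (h23 ηb u).1 hηb (S.E_of_isIso u)
  exact (h23 f s).2.2 hEs (hs ▸ hηa)
end

section
/- In the category Cat of small categories and functors, every functor that is bijective on objects is left orthogonal to every fully faithful functor: given functors E : A → B bijective on objects, M : C → D fully faithful, and functors F : A → C, G : B → D with M ∘ F = G ∘ E, there exists a unique functor H : B → C with H ∘ E = F and M ∘ H = G. -/
/-!
On objects the lift is forced: `H b = F (E⁻¹ b)`. On morphisms it is forced as well, since `M` is
fully faithful: `H f` must be the unique preimage under `M` of `G f`, transported along the
equalities `M (F (E⁻¹ b)) = G (E (E⁻¹ b)) = G b`. Both triangles, and uniqueness, then follow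
because a functor into `C` is determined by its object map and its composite with the faithful `M`.
-/

open CategoryTheory

namespace CategoryTheory.Functor

variable {A B C D : Type*} [Category A] [Category B] [Category C] [Category D]

theorem ext_of_comp_faithful (M : C ⥤ D) [M.Faithful] {H H' : B ⥤ C}
    (hobj : ∀ b, H.obj b = H'.obj b) (hcomp : H ⋙ M = H' ⋙ M) : H = H' :=
  Functor.ext hobj fun _ _ f => M.map_injective <| by
    simpa [eqToHom_map] using Functor.congr_hom hcomp f

theorem ext_of_surjective_of_faithful {E : A ⥤ B} (hE : Function.Surjective E.obj)
    (M : C ⥤ D) [M.Faithful] {H H' : B ⥤ C} (hE' : E ⋙ H = E ⋙ H')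
    (hM : H ⋙ M = H' ⋙ M) : H = H' :=
  ext_of_comp_faithful M (fun b => by
    obtain ⟨a, rfl⟩ := hE b
    exact Functor.congr_obj hE' a) hM

noncomputable def liftOfFullyFaithful (M : C ⥤ D) [M.Full] [M.Faithful] (G : B ⥤ D)
    (o : B → C) (ho : ∀ b, M.obj (o b) = G.obj b) : B ⥤ C where
  obj := o
  map f := M.preimage (eqToHom (ho _) ≫ G.map f ≫ eqToHom (ho _).symm)
  map_id _ := M.map_injective (by simp)
  map_comp _ _ := M.map_injective (by simp)

theorem liftOfFullyFaithful_comp (M : C ⥤ D) [M.Full] [M.Faithful] (G : B ⥤ D) (o : B → C)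
    (ho : ∀ b, M.obj (o b) = G.obj b) : liftOfFullyFaithful M G o ho ⋙ M = G :=
  Functor.ext ho fun _ _ _ => by simp [liftOfFullyFaithful]

end CategoryTheory.Functor

theorem stmt7 {A B C D : Type*} [Category A] [Category B] [Category C] [Category D]
    (E : A ⥤ B) (M : C ⥤ D)
    (hE : Function.Bijective E.obj) (hM₁ : M.Full) (hM₂ : M.Faithful)
    (F : A ⥤ C) (G : B ⥤ D) (hsq : E ⋙ G = F ⋙ M) :
    ∃! H : B ⥤ C, E ⋙ H = F ∧ H ⋙ M = G := by
  let e := Equiv.ofBijective E.obj hE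
  have hobj (b : B) : M.obj (F.obj (e.symm b)) = G.obj b := by
    rw [← Functor.comp_obj, ← hsq, Functor.comp_obj]
    exact congrArg G.obj (e.apply_symm_apply b)
  set L := Functor.liftOfFullyFaithful M G (F.obj ∘ e.symm) hobj
  have hLM : L ⋙ M = G := Functor.liftOfFullyFaithful_comp M G _ hobj
  have hEL : E ⋙ L = F :=
    Functor.ext_of_comp_faithful M (fun a => congrArg F.obj (e.symm_apply_apply a))
      (by rw [Functor.assoc, hLM, hsq])
  refine ⟨L, ⟨hEL, hLM⟩, fun H ⟨hEH, hHM⟩ => ?_⟩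
  exact Functor.ext_of_surjective_of_faithful hE.2 M (hEH.trans hEL.symm) (hHM.trans hLM.symm)
end
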